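/- arXiv:1302.0949 — 7 statements merged into one kernel-verified Lean document; each statement's English description precedes it below -/
import Mathlib

section
/- The bounded linear operator 𝒦 on C(Ω̄) defined by (𝒦u)(x) = ∫_Ω K(x,y) u(y)/(a(x₀)−a(y)) dy is a compact operator; consequently its spectrum consists of 0 together with isolated eigenvalues. -/
/-!
Compactness is Arzelà–Ascoli: `K` is uniformly continuous on the compact set `Ω̄ × Ω̄` and the
weight `1 / (a x₀ - a y)` is integrable over `Ω`, so
`|(T u)(x) - (T u)(x')| ≤ η ‖u‖ ∫_Ω |a x₀ - a y|⁻¹ dy` whenever `|K(x, ·) - K(x', ·)| ≤ η` on `Ω̄`;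
the image of the unit ball is therefore bounded and equicontinuous.

By the Fredholm alternative every nonzero spectral value of a compact operator `T` is an
eigenvalue. If infinitely many eigenvalues `μₙ` had `‖μₙ‖ ≥ r > 0`, let `Yₙ` be the span of
eigenvectors for `μ₀, …, μₙ₋₁`. Riesz's lemma gives bounded `fₙ ∈ Yₙ₊₁` at distance at least `1`
from `Yₙ`; as `T Yₙ ⊆ Yₙ` and `(T - μₙ) Yₙ₊₁ ⊆ Yₙ`, the images `T fₙ` are pairwise at distance at
least `r`, contradicting compactness. So only finitely many eigenvalues lie outside each disc
around `0`, and nonzero spectral values are isolated.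
-/

open MeasureTheory Set Metric BoundedContinuousFunction Classical Filter Topology
open Module End Submodule

section Spectral

variable {𝕜 X : Type*} [NontriviallyNormedField 𝕜] [NormedAddCommGroup X] [NormedSpace 𝕜 X]

theorem Submodule.exists_mem_norm_le_forall_one_le_norm_sub {c : 𝕜} (hc : 1 < ‖c‖) {R : ℝ}
    (hR : ‖c‖ < R) {F G : Submodule 𝕜 X} (hF : IsClosed (F : Set X)) (hFG : F < G) :
    ∃ x ∈ G, ‖x‖ ≤ R ∧ ∀ y ∈ F, 1 ≤ ‖x - y‖ := by
  obtain ⟨x, hxG, hxF⟩ := SetLike.exists_of_lt hFG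
  obtain ⟨x₀, hx₀R, hx₀F⟩ := riesz_lemma_of_norm_lt hc hR (F := F.comap G.subtype)
    (hF.preimage continuous_subtype_val) ⟨⟨x, hxG⟩, hxF⟩
  exact ⟨x₀, x₀.2, hx₀R, fun y hy => hx₀F ⟨y, hFG.le hy⟩ hy⟩

theorem IsCompactOperator.exists_lt_norm_apply_sub_lt {Y : Type*} [NormedAddCommGroup Y]
    [NormedSpace 𝕜 Y] {T : X →L[𝕜] Y} (hT : IsCompactOperator T) {R c : ℝ} (hc : 0 < c)
    {f : ℕ → X} (hf : ∀ n, ‖f n‖ ≤ R) : ∃ m n, m < n ∧ ‖T (f n) - T (f m)‖ < c := by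
  obtain ⟨K, hK, hTK⟩ := hT.image_closedBall_subset_compact R
  obtain ⟨y, -, ψ, hψ, hψy⟩ :=
    hK.tendsto_subseq fun n => hTK ⟨f n, mem_closedBall_zero_iff.2 (hf n), rfl⟩
  obtain ⟨N, hN⟩ := Metric.cauchySeq_iff'.1 hψy.cauchySeq c hc
  exact ⟨ψ N, ψ (N + 1), hψ N.lt_succ_self, by simpa [dist_eq_norm] using hN (N + 1) N.le_succ⟩

theorem Module.End.sub_smul_mem_span_image_of_hasEigenvector {R M ι : Type*} [CommRing R]
    [AddCommGroup M] [Module R M] {f : End R M} {μ : ι → R} {v : ι → M}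
    (hv : ∀ i, f.HasEigenvector (μ i) (v i)) (s : Set ι) (ν : R) {x : M}
    (hx : x ∈ span R (v '' s)) : f x - ν • x ∈ span R (v '' {i ∈ s | μ i ≠ ν}) := by
  suffices map (f - ν • 1) (span R (v '' s)) ≤ span R (v '' {i ∈ s | μ i ≠ ν}) from
    this ⟨x, hx, rfl⟩
  rw [map_span_le]
  rintro _ ⟨i, hi, rfl⟩
  have hfv : (f - ν • 1) (v i) = (μ i - ν) • v i := by
    simp [(hv i).apply_eq_smul, sub_smul]
  rw [hfv]
  by_cases hμν : μ i = ν
  · simp [hμν]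
  · exact smul_mem _ _ (subset_span ⟨i, ⟨hi, hμν⟩, rfl⟩)

variable [CompleteSpace 𝕜] {T : X →L[𝕜] X}

theorem IsCompactOperator.finite_setOf_hasEigenvalue_le_norm (hT : IsCompactOperator T) {r : ℝ}
    (hr : 0 < r) : {μ : 𝕜 | HasEigenvalue (T : End 𝕜 X) μ ∧ r ≤ ‖μ‖}.Finite := by
  by_contra hinf
  let μ : ℕ → 𝕜 := fun n => Set.Infinite.natEmbedding _ hinf n
  have hμ : Function.Injective μ :=
    Subtype.val_injective.comp (Set.Infinite.natEmbedding _ hinf).injective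
  have hμS (n : ℕ) : HasEigenvalue (T : End 𝕜 X) (μ n) ∧ r ≤ ‖μ n‖ :=
    (Set.Infinite.natEmbedding _ hinf n).2
  choose e he using fun n => (hμS n).1.exists_hasEigenvector
  have hli := eigenvectors_linearIndependent' _ μ hμ e he
  let Y : ℕ → Submodule 𝕜 X := fun k => span 𝕜 (e '' Iio k)
  have hYmono : Monotone Y := fun j k hjk => span_mono (image_mono (Iio_subset_Iio hjk))
  have hYclosed (k : ℕ) : IsClosed (Y k : Set X) :=
    haveI := FiniteDimensional.span_of_finite 𝕜 ((finite_Iio k).image e)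
    (Y k).closed_of_finiteDimensional
  have hYlt (k : ℕ) : Y k < Y (k + 1) :=
    (hYmono k.le_succ).lt_of_ne fun h => by
      have hek : e k ∈ Y (k + 1) := subset_span ⟨k, k.lt_succ_self, rfl⟩
      rw [← h] at hek
      exact hli.notMem_span_image (s := Iio k) (lt_irrefl k) hek
  have hTY {k : ℕ} {x : X} (hx : x ∈ Y k) : T x ∈ Y k := by
    simpa using span_mono (image_mono (sep_subset _ _))
      (sub_smul_mem_span_image_of_hasEigenvector he (Iio k) 0 hx)
  have hSY {k : ℕ} {x : X} (hx : x ∈ Y (k + 1)) : T x - μ k • x ∈ Y k := by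
    refine span_mono (image_mono ?_) (sub_smul_mem_span_image_of_hasEigenvector he _ (μ k) hx)
    rintro i ⟨hik, hμik⟩
    exact lt_of_le_of_ne (Nat.lt_succ_iff.1 hik) fun h => hμik (h ▸ rfl)
  obtain ⟨c, hc⟩ := NormedField.exists_one_lt_norm 𝕜
  choose f hfY hfR hfsep using fun k =>
    exists_mem_norm_le_forall_one_le_norm_sub hc (lt_add_one ‖c‖) (hYclosed k) (hYlt k)
  obtain ⟨m, n, hmn, hlt⟩ := hT.exists_lt_norm_apply_sub_lt hr hfR
  have hμn : μ n ≠ 0 := norm_pos_iff.1 (hr.trans_le (hμS n).2)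
  -- `T (f n) ≡ μ n • f n` modulo `Y n`, while `T (f m) ∈ Y n`.
  let z := (μ n)⁻¹ • (μ n • f n - T (f n) + T (f m))
  have hz : z ∈ Y n := by
    refine smul_mem _ _ (add_mem ?_ (hTY (hYmono hmn (hfY m))))
    simpa [neg_sub] using neg_mem (hSY (hfY n))
  have hdiff : T (f n) - T (f m) = μ n • (f n - z) := by
    simp only [z, smul_sub, smul_inv_smul₀ hμn]
    abel
  refine hlt.not_ge ?_
  calc r = r * 1 := (mul_one r).symm
    _ ≤ ‖μ n‖ * ‖f n - z‖ := mul_le_mul (hμS n).2 (hfsep n z hz) zero_le_one (norm_nonneg _)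
    _ = ‖T (f n) - T (f m)‖ := by rw [hdiff, norm_smul]

theorem IsCompactOperator.eventually_notMem_spectrum [CompleteSpace X] (hT : IsCompactOperator T)
    {l : 𝕜} (hl : l ≠ 0) : ∀ᶠ μ in 𝓝[≠] l, μ ∉ spectrum 𝕜 T := by
  have hr : 0 < ‖l‖ / 2 := by positivity
  have hfar : ∀ᶠ μ in 𝓝 l, μ ∉ {μ | HasEigenvalue (T : End 𝕜 X) μ ∧ ‖l‖ / 2 ≤ ‖μ‖} \ {l} :=
    ((hT.finite_setOf_hasEigenvalue_le_norm hr).sdiff.isClosed.isOpen_compl.mem_nhds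
      fun h => h.2 rfl)
  have hbig : ∀ᶠ μ in 𝓝 l, ‖l‖ / 2 < ‖μ‖ :=
    continuousAt_const.eventually_lt continuous_norm.continuousAt (half_lt_self (norm_pos_iff.2 hl))
  filter_upwards [nhdsWithin_le_nhds hfar, nhdsWithin_le_nhds hbig, self_mem_nhdsWithin]
    with μ hμfar hμbig hμl hμ
  have hμ0 : μ ≠ 0 := norm_pos_iff.1 (hr.trans hμbig)
  exact hμfar ⟨⟨(hT.hasEigenvalue_iff_mem_spectrum hμ0).2 hμ, hμbig.le⟩, hμl⟩

end Spectral

section ZeroExtend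

variable {α : Type*} [TopologicalSpace α] (s : Set α)

noncomputable def zeroExtend : (s →ᵇ ℝ) →ₗ[ℝ] α → ℝ where
  toFun u y := if hy : y ∈ s then u ⟨y, hy⟩ else 0
  map_add' u v := by ext y; by_cases hy : y ∈ s <;> simp [hy]
  map_smul' c u := by ext y; by_cases hy : y ∈ s <;> simp [hy]

variable {s}

theorem abs_zeroExtend_le (u : s →ᵇ ℝ) (y : α) : |zeroExtend s u y| ≤ ‖u‖ := by
  simp only [zeroExtend, LinearMap.coe_mk, AddHom.coe_mk]
  split_ifs
  · exact u.norm_coe_le_norm _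
  · simp

theorem continuousOn_zeroExtend (u : s →ᵇ ℝ) : ContinuousOn (zeroExtend s u) s := by
  rw [continuousOn_iff_continuous_domRestrict]
  convert u.continuous using 1
  ext y
  simp [zeroExtend, y.2]

end ZeroExtend

theorem abs_integral_mul_le_of_abs_le {Y : Type*} [MeasurableSpace Y] {μ : Measure Y}
    {f w : Y → ℝ} (hw : Integrable w μ) {C : ℝ} (hf : ∀ᵐ y ∂μ, |f y| ≤ C) :
    |∫ y, f y * w y ∂μ| ≤ C * ∫ y, |w y| ∂μ := by
  rw [← integral_const_mul, ← Real.norm_eq_abs]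
  refine norm_integral_le_of_norm_le (hw.abs.const_mul C) ?_
  filter_upwards [hf] with y hy
  rw [Real.norm_eq_abs, abs_mul]
  exact mul_le_mul_of_nonneg_right hy (abs_nonneg _)

theorem ContinuousOn.aestronglyMeasurable_of_ae_mem {E β : Type*} [TopologicalSpace E]
    [MeasurableSpace E] [OpensMeasurableSpace E] [TopologicalSpace β]
    [TopologicalSpace.PseudoMetrizableSpace β] [SecondCountableTopologyEither E β]
    {μ : Measure E} {s : Set E} {f : E → β}
    (hf : ContinuousOn f s) (hs : MeasurableSet s) (hμ : ∀ᵐ y ∂μ, y ∈ s) :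
    AEStronglyMeasurable f μ := by
  rw [← Measure.restrict_eq_self_of_ae_mem hμ]
  exact hf.aestronglyMeasurable hs

section KernelOperator

variable {E : Type*} [MetricSpace E] {s : Set E} [CompactSpace s] {k : E → E → ℝ}

theorem exists_abs_kernel_mul_zeroExtend_le (hk : ContinuousOn (Function.uncurry k) (s ×ˢ s)) :
    ∃ M, ∀ x ∈ s, ∀ y ∈ s, ∀ u : s →ᵇ ℝ, |k x y * zeroExtend s u y| ≤ M * ‖u‖ := by
  have hsc : IsCompact s := isCompact_iff_compactSpace.2 ‹_›
  obtain ⟨M, hM⟩ := (hsc.prod hsc).exists_bound_of_continuousOn hk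
  refine ⟨M, fun x hx y hy u => ?_⟩
  rw [abs_mul]
  exact mul_le_mul (hM (x, y) ⟨hx, hy⟩) (abs_zeroExtend_le u y) (abs_nonneg _)
    ((norm_nonneg _).trans (hM (x, y) ⟨hx, hy⟩))

variable [MeasurableSpace E] {μ : Measure E} {w : E → ℝ}

theorem exists_abs_integral_kernel_mul_zeroExtend_le
    (hk : ContinuousOn (Function.uncurry k) (s ×ˢ s)) (hw : Integrable w μ)
    (hμ : ∀ᵐ y ∂μ, y ∈ s) :
    ∃ C, ∀ x ∈ s, ∀ u : s →ᵇ ℝ, |∫ y, k x y * zeroExtend s u y * w y ∂μ| ≤ C * ‖u‖ := by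
  obtain ⟨M, hM⟩ := exists_abs_kernel_mul_zeroExtend_le hk
  refine ⟨M * ∫ y, |w y| ∂μ, fun x hx u => ?_⟩
  calc _ ≤ M * ‖u‖ * ∫ y, |w y| ∂μ :=
        abs_integral_mul_le_of_abs_le hw (hμ.mono fun y hy => hM x hx y hy u)
    _ = _ := by ring

variable [OpensMeasurableSpace E]

theorem integrable_kernel_mul_zeroExtend (hk : ContinuousOn (Function.uncurry k) (s ×ˢ s))
    (hw : Integrable w μ) (hμ : ∀ᵐ y ∂μ, y ∈ s) {x : E} (hx : x ∈ s) (u : s →ᵇ ℝ) :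
    Integrable (fun y => k x y * zeroExtend s u y * w y) μ := by
  obtain ⟨M, hM⟩ := exists_abs_kernel_mul_zeroExtend_le hk
  have hkx : ContinuousOn (k x) s :=
    hk.comp (continuousOn_const.prodMk continuousOn_id) fun y hy => ⟨hx, hy⟩
  refine hw.bdd_mul ?_ (hμ.mono fun y hy => (hM x hx y hy u : ‖_‖ ≤ _))
  exact (hkx.mul (continuousOn_zeroExtend u)).aestronglyMeasurable_of_ae_mem
    (isCompact_iff_compactSpace.2 ‹_›).isClosed.measurableSet hμ

theorem exists_abs_integral_kernel_mul_zeroExtend_sub_le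
    (hk : ContinuousOn (Function.uncurry k) (s ×ˢ s)) (hw : Integrable w μ)
    (hμ : ∀ᵐ y ∂μ, y ∈ s) {ε : ℝ} (hε : 0 < ε) :
    ∃ δ > 0, ∀ x ∈ s, ∀ x' ∈ s, dist x x' < δ → ∀ u : s →ᵇ ℝ,
      |∫ y, k x y * zeroExtend s u y * w y ∂μ - ∫ y, k x' y * zeroExtend s u y * w y ∂μ|
        ≤ ε * ‖u‖ := by
  have hsc : IsCompact s := isCompact_iff_compactSpace.2 ‹_›
  set I := ∫ y, |w y| ∂μ
  have hI : 0 ≤ I := integral_nonneg fun _ => abs_nonneg _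
  -- uniform continuity of `k` with the tolerance `ε / (I + 1)` absorbs the factor `I`
  have hη : 0 < ε / (I + 1) := by positivity
  obtain ⟨δ, hδ, hkδ⟩ := Metric.uniformContinuousOn_iff.1
    ((hsc.prod hsc).uniformContinuousOn_of_continuous hk) _ hη
  refine ⟨δ, hδ, fun x hx x' hx' hxx' u => ?_⟩
  have hbound : ∀ᵐ y ∂μ, |(k x y - k x' y) * zeroExtend s u y| ≤ ε / (I + 1) * ‖u‖ := by
    filter_upwards [hμ] with y hy
    have hdist : dist (x, y) (x', y) < δ := by simpa [Prod.dist_eq] using hxx'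
    rw [abs_mul]
    exact mul_le_mul (hkδ (x, y) ⟨hx, hy⟩ (x', y) ⟨hx', hy⟩ hdist).le (abs_zeroExtend_le u y)
      (abs_nonneg _) hη.le
  rw [← integral_sub (integrable_kernel_mul_zeroExtend hk hw hμ hx u)
    (integrable_kernel_mul_zeroExtend hk hw hμ hx' u)]
  simp_rw [← sub_mul]
  calc _ ≤ ε / (I + 1) * ‖u‖ * I := abs_integral_mul_le_of_abs_le hw hbound
    _ = ε * ‖u‖ * (I / (I + 1)) := by ring
    _ ≤ ε * ‖u‖ := mul_le_of_le_one_right (by positivity)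
      ((div_le_one (by positivity)).2 (le_add_of_nonneg_right zero_le_one))

theorem continuous_integral_kernel_mul_zeroExtend
    (hk : ContinuousOn (Function.uncurry k) (s ×ˢ s)) (hw : Integrable w μ)
    (hμ : ∀ᵐ y ∂μ, y ∈ s) (u : s →ᵇ ℝ) :
    Continuous fun x : s => ∫ y, k x y * zeroExtend s u y * w y ∂μ := by
  refine Metric.continuous_iff.2 fun x ε hε => ?_
  have hε' : 0 < ε / (‖u‖ + 1) := by positivity
  obtain ⟨δ, hδ, h⟩ := exists_abs_integral_kernel_mul_zeroExtend_sub_le hk hw hμ hε'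
  refine ⟨δ, hδ, fun x' hx' => ?_⟩
  calc _ ≤ ε / (‖u‖ + 1) * ‖u‖ := h x' x'.2 x x.2 hx' u
    _ < ε := by
      rw [div_mul_eq_mul_div, div_lt_iff₀ (by positivity)]
      nlinarith [norm_nonneg u]

noncomputable def kernelOperator (hk : ContinuousOn (Function.uncurry k) (s ×ˢ s))
    (hw : Integrable w μ) (hμ : ∀ᵐ y ∂μ, y ∈ s) : (s →ᵇ ℝ) →L[ℝ] (s →ᵇ ℝ) :=
  LinearMap.mkContinuousOfExistsBound
    { toFun u := mkOfCompact
        ⟨fun x => ∫ y, k x y * zeroExtend s u y * w y ∂μ,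
          continuous_integral_kernel_mul_zeroExtend hk hw hμ u⟩
      map_add' u v := by
        ext x
        simp only [map_add, Pi.add_apply, mul_add, add_mul, mkOfCompact_apply,
          ContinuousMap.coe_mk, BoundedContinuousFunction.coe_add]
        exact integral_add (integrable_kernel_mul_zeroExtend hk hw hμ x.2 u)
          (integrable_kernel_mul_zeroExtend hk hw hμ x.2 v)
      map_smul' c u := by
        ext x
        simp only [map_smul, Pi.smul_apply, smul_eq_mul, mkOfCompact_apply,
          ContinuousMap.coe_mk, BoundedContinuousFunction.coe_smul, RingHom.id_apply,
          ← integral_const_mul]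
        congr 1 with y
        ring }
    (by
      obtain ⟨C, hC⟩ := exists_abs_integral_kernel_mul_zeroExtend_le hk hw hμ
      exact ⟨max C 0, fun u => (norm_le (by positivity)).2 fun x =>
        (hC x x.2 u).trans (mul_le_mul_of_nonneg_right (le_max_left _ _) (norm_nonneg _))⟩)

theorem kernelOperator_apply (hk : ContinuousOn (Function.uncurry k) (s ×ˢ s))
    (hw : Integrable w μ) (hμ : ∀ᵐ y ∂μ, y ∈ s) (u : s →ᵇ ℝ) (x : s) :
    kernelOperator hk hw hμ u x = ∫ y, k x y * zeroExtend s u y * w y ∂μ :=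
  rfl

theorem isCompactOperator_kernelOperator (hk : ContinuousOn (Function.uncurry k) (s ×ˢ s))
    (hw : Integrable w μ) (hμ : ∀ᵐ y ∂μ, y ∈ s) : IsCompactOperator (kernelOperator hk hw hμ) := by
  set T := kernelOperator hk hw hμ
  refine (isCompactOperator_iff_isCompact_closure_image_closedBall T.toLinearMap one_pos).2 ?_
  refine arzela_ascoli (closedBall 0 ‖T‖) (isCompact_closedBall 0 ‖T‖) _ ?_ fun x => ?_
  · rintro _ x ⟨u, hu, rfl⟩
    rw [mem_closedBall_zero_iff]
    calc ‖T u x‖ ≤ ‖T u‖ := (T u).norm_coe_le_norm x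
      _ ≤ ‖T‖ * 1 := T.le_opNorm_of_le (mem_closedBall_zero_iff.1 hu)
      _ = ‖T‖ := mul_one _
  refine Metric.equicontinuousAt_iff.2 fun ε hε => ?_
  obtain ⟨δ, hδ, h⟩ := exists_abs_integral_kernel_mul_zeroExtend_sub_le hk hw hμ (half_pos hε)
  refine ⟨δ, hδ, fun x' hx' ⟨_, u, hu, hTu⟩ => ?_⟩
  subst hTu
  rw [Real.dist_eq]
  calc _ ≤ ε / 2 * ‖u‖ := h x x.2 x' x'.2 (by rwa [dist_comm]) u
    _ ≤ ε / 2 * 1 := mul_le_mul_of_nonneg_left (mem_closedBall_zero_iff.1 hu) (half_pos hε).le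
    _ < ε := by linarith

end KernelOperator

theorem stmt4_general {n : ℕ} (Ω : Set (EuclideanSpace ℝ (Fin n)))
    (hbd : Bornology.IsBounded Ω) (hop : IsOpen Ω)
    (K : EuclideanSpace ℝ (Fin n) → EuclideanSpace ℝ (Fin n) → ℝ)
    (hKcont : Continuous fun p : EuclideanSpace ℝ (Fin n) × EuclideanSpace ℝ (Fin n) =>
      K p.1 p.2)
    (a : EuclideanSpace ℝ (Fin n) → ℝ)
    (x₀ : EuclideanSpace ℝ (Fin n))
    (hL1 : IntegrableOn (fun y => 1 / (a x₀ - a y)) Ω) :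
    ∃ T : (↥(closure Ω) →ᵇ ℝ) →L[ℝ] (↥(closure Ω) →ᵇ ℝ),
      (∀ u : ↥(closure Ω) →ᵇ ℝ, ∀ x : ↥(closure Ω),
        T u x = ∫ y in Ω,
          K (↑x) y * (if hy : y ∈ closure Ω then u ⟨y, hy⟩ else 0) / (a x₀ - a y)) ∧
      IsCompactOperator T ∧
      ∀ l ∈ spectrum ℝ T, l ≠ 0 →
        (∃ u : ↥(closure Ω) →ᵇ ℝ, u ≠ 0 ∧ T u = l • u) ∧
        ∃ ε > (0 : ℝ), ∀ l' ∈ spectrum ℝ T, l' ≠ l → ε ≤ |l' - l| := by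
  have : CompactSpace (closure Ω) := isCompact_iff_compactSpace.1 hbd.isCompact_closure
  have hK : ContinuousOn (Function.uncurry K) (closure Ω ×ˢ closure Ω) := hKcont.continuousOn
  have hw : Integrable (fun y => 1 / (a x₀ - a y)) (volume.restrict Ω) := hL1
  have hμ : ∀ᵐ y ∂volume.restrict Ω, y ∈ closure Ω :=
    (ae_restrict_mem hop.measurableSet).mono fun _ hy => subset_closure hy
  have hT := isCompactOperator_kernelOperator hK hw hμ
  refine ⟨kernelOperator hK hw hμ, fun u x => ?_, hT, fun l hl hl0 => ⟨?_, ?_⟩⟩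
  · rw [kernelOperator_apply]
    simp only [mul_one_div]
    rfl
  · obtain ⟨u, hu⟩ := ((hT.hasEigenvalue_iff_mem_spectrum hl0).2 hl).exists_hasEigenvector
    exact ⟨u, hu.2, hu.apply_eq_smul⟩
  · obtain ⟨ε, hε, h⟩ :=
      Metric.eventually_nhds_iff.1 (eventually_nhdsWithin_iff.1 (hT.eventually_notMem_spectrum hl0))
    exact ⟨ε, hε, fun l' hl' hne => not_lt.1 fun hlt => h (by rwa [Real.dist_eq]) hne hl'⟩

/-- The operator `𝒦u(x) = ∫_Ω K(x,y) u(y)/(a(x₀)-a(y)) dy`, viewed as a bounded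
linear operator on the continuous functions on the compact set `Ω̄`, is a compact
operator, and every nonzero element of its spectrum is an isolated eigenvalue. -/
theorem stmt4 {n : ℕ} (Ω : Set (EuclideanSpace ℝ (Fin n)))
    (hne : Ω.Nonempty) (hbd : Bornology.IsBounded Ω) (hop : IsOpen Ω)
    (hconn : IsConnected Ω)
    (K : EuclideanSpace ℝ (Fin n) → EuclideanSpace ℝ (Fin n) → ℝ)
    (hKcont : Continuous fun p : EuclideanSpace ℝ (Fin n) × EuclideanSpace ℝ (Fin n) =>
      K p.1 p.2)
    (hKnn : ∀ x y, 0 ≤ K x y)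
    (c₀ ε₀ : ℝ) (hc₀ : 0 < c₀) (hε₀ : 0 < ε₀)
    (hKpos : ∀ x ∈ Ω, ∀ y ∈ ball x ε₀, c₀ < K x y)
    (a : EuclideanSpace ℝ (Fin n) → ℝ)
    (ha : ContinuousOn a (closure Ω))
    (habd : ∃ C, ∀ x ∈ closure Ω, |a x| ≤ C)
    (x₀ : EuclideanSpace ℝ (Fin n)) (hx₀ : x₀ ∈ closure Ω)
    (hmax : a x₀ = sSup (a '' closure Ω))
    (hL1 : IntegrableOn (fun y => 1 / (a x₀ - a y)) Ω) :
    ∃ T : (↥(closure Ω) →ᵇ ℝ) →L[ℝ] (↥(closure Ω) →ᵇ ℝ),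
      (∀ u : ↥(closure Ω) →ᵇ ℝ, ∀ x : ↥(closure Ω),
        T u x = ∫ y in Ω,
          K (↑x) y * (if hy : y ∈ closure Ω then u ⟨y, hy⟩ else 0) / (a x₀ - a y)) ∧
      IsCompactOperator T ∧
      ∀ l ∈ spectrum ℝ T, l ≠ 0 →
        (∃ u : ↥(closure Ω) →ᵇ ℝ, u ≠ 0 ∧ T u = l • u) ∧
        ∃ ε > (0 : ℝ), ∀ l' ∈ spectrum ℝ T, l' ≠ l → ε ≤ |l' - l| :=
  stmt4_general Ω hbd hop K hKcont a x₀ hL1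
end

section
/- Let Ω = B₁(0) ⊂ ℝ³, a(x) = 1 − ‖x‖², and ρ > 1/(4π). Then there exist λ_p < −1 and φ_p ∈ C(Ω̄) with φ_p > 0 on Ω̄ such that ρ∫_Ω φ_p(y) dy + (a(x) + λ_p) φ_p(x) = 0 for all x ∈ Ω̄. Explicitly, there is a unique λ_p < −1 with ρ ∫_Ω dx/(−λ_p − a(x)) = 1, and φ_p(x) = ρ/(−λ_p − a(x)) is such a solution (with ∫_Ω φ_p = 1). -/
/-! Write `c = -λ - 1 > 0`. In polar coordinates
`∫_{B₁} dx / (c + ‖x‖²) = 4π J(c)` with `J(c) = ∫₀¹ r² / (c + r²) dr = 1 - √c arctan (1 / √c)`.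
`J` is continuous and strictly decreasing on `(0, ∞)`, close to `1` for small `c` and at most
`1 / (3c)`, so `4πρ J(c) = 1` has exactly one root `c > 0` as soon as `4πρ > 1`.
For `φ = ρ / (c + ‖x‖²)` one then has `∫ φ = 1` and `(a + λ) φ = -ρ`. -/

open MeasureTheory Set Metric Real intervalIntegral

theorem setIntegral_ball_fun_norm {E F : Type*} [NormedAddCommGroup E] [NormedSpace ℝ E]
    [Nontrivial E] [FiniteDimensional ℝ E] [MeasurableSpace E] [BorelSpace E]
    [NormedAddCommGroup F] [NormedSpace ℝ F]
    (μ : Measure E) [μ.IsAddHaarMeasure] (f : ℝ → F) {R : ℝ} (hR : 0 ≤ R) :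
    ∫ x in ball (0 : E) R, f ‖x‖ ∂μ =
      Module.finrank ℝ E • μ.real (ball 0 1) •
        ∫ r in (0 : ℝ)..R, r ^ (Module.finrank ℝ E - 1) • f r := by
  have hball : ball (0 : E) R = norm ⁻¹' Iio R := by ext; simp
  have hsmul : (fun r : ℝ ↦ r ^ (Module.finrank ℝ E - 1) • (Iio R).indicator f r) =
      (Iio R).indicator fun r ↦ r ^ (Module.finrank ℝ E - 1) • f r :=
    funext fun r ↦ (indicator_smul_apply _ _ _ r).symm
  simp_rw [← MeasureTheory.integral_indicator measurableSet_ball, hball,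
    ← Function.comp_apply (f := f), indicator_comp_right, integral_fun_norm_addHaar μ,
    hsmul, setIntegral_indicator measurableSet_Iio, Ioi_inter_Iio,
    integral_of_le hR, integral_Ioc_eq_integral_Ioo]

theorem integral_ball_fin_three_inv_add_norm_sq (c : ℝ) :
    ∫ x in ball (0 : EuclideanSpace ℝ (Fin 3)) 1, 1 / (c + ‖x‖ ^ 2) =
      4 * π * ∫ r in (0 : ℝ)..1, r ^ 2 / (c + r ^ 2) := by
  rw [setIntegral_ball_fun_norm volume (fun r ↦ 1 / (c + r ^ 2)) zero_le_one]
  simp only [finrank_euclideanSpace, Fintype.card_fin, measureReal_def,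
    EuclideanSpace.volume_ball_fin_three, ENNReal.ofReal_one, one_pow, one_mul,
    ENNReal.toReal_ofReal (by positivity : 0 ≤ π * 4 / 3), smul_eq_mul, mul_one_div, nsmul_eq_mul]
  ring

theorem integral_sq_div_add_sq {c : ℝ} (hc : 0 < c) :
    ∫ r in (0 : ℝ)..1, r ^ 2 / (c + r ^ 2) = 1 - √c * arctan (1 / √c) := by
  have hs : 0 < √c := sqrt_pos.mpr hc
  have hrw : ∀ r : ℝ, r ^ 2 / (c + r ^ 2) = 1 - 1 / (1 + (r / √c) ^ 2) := fun r ↦ by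
    have : 0 < c + r ^ 2 := by positivity
    rw [div_pow, sq_sqrt hc.le]
    field_simp
    ring
  have hint : IntervalIntegrable (fun r : ℝ ↦ 1 / (1 + (r / √c) ^ 2)) volume 0 1 :=
    (continuous_const.div (by fun_prop) fun r ↦ by positivity).intervalIntegrable 0 1
  simp_rw [hrw]
  rw [integral_sub intervalIntegrable_const hint,
    integral_comp_div (fun u ↦ 1 / (1 + u ^ 2)) hs.ne', integral_one_div_one_add_sq]
  simp

theorem integral_sq_div_add_sq_le {c : ℝ} (hc : 0 < c) :
    ∫ r in (0 : ℝ)..1, r ^ 2 / (c + r ^ 2) ≤ 1 / (3 * c) :=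
  calc ∫ r in (0 : ℝ)..1, r ^ 2 / (c + r ^ 2)
      ≤ ∫ r in (0 : ℝ)..1, r ^ 2 / c := by
        refine integral_mono_on zero_le_one ?_ ?_ fun r _ ↦ ?_
        · exact (continuous_pow 2 |>.div (by fun_prop) fun r ↦ by positivity).intervalIntegrable 0 1
        · exact (continuous_pow 2 |>.div_const c).intervalIntegrable 0 1
        · gcongr
          exact le_add_of_nonneg_right (sq_nonneg r)
    _ = 1 / (3 * c) := by
        rw [intervalIntegral.integral_div, integral_pow]
        field_simp
        norm_num

theorem strictAntiOn_integral_sq_div_add_sq :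
    StrictAntiOn (fun c : ℝ ↦ ∫ r in (0 : ℝ)..1, r ^ 2 / (c + r ^ 2)) (Ioi 0) := by
  rintro c₁ (hc₁ : 0 < c₁) c₂ (hc₂ : 0 < c₂) h
  have hcont : ∀ c : ℝ, 0 < c → ContinuousOn (fun r : ℝ ↦ r ^ 2 / (c + r ^ 2)) (Icc 0 1) :=
    fun c hc ↦ (continuous_pow 2 |>.div (by fun_prop)
      fun r ↦ (add_pos_of_pos_of_nonneg hc (sq_nonneg r)).ne').continuousOn
  refine integral_lt_integral_of_continuousOn_of_le_of_exists_lt one_pos (hcont c₂ hc₂)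
    (hcont c₁ hc₁) (fun r _ ↦ ?_) ⟨1, by simp, ?_⟩
  · have := sq_nonneg r
    gcongr
  · simp only [one_pow]
    gcongr

theorem existsUnique_pos_integral_sq_div_add_sq_eq {t : ℝ} (ht₀ : 0 < t) (ht₁ : t < 1) :
    ∃! c : ℝ, 0 < c ∧ ∫ r in (0 : ℝ)..1, r ^ 2 / (c + r ^ 2) = t := by
  set J := fun c : ℝ ↦ ∫ r in (0 : ℝ)..1, r ^ 2 / (c + r ^ 2)
  have hJ : EqOn (fun c ↦ 1 - √c * arctan (1 / √c)) J (Ioi 0) :=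
    fun c hc ↦ (integral_sq_div_add_sq hc).symm
  have hcont : ContinuousOn J (Ioi 0) := by
    refine ContinuousOn.congr ?_ hJ.symm
    refine continuousOn_const.sub (continuous_sqrt.continuousOn.mul ?_)
    exact continuous_arctan.comp_continuousOn
      (continuousOn_const.div continuous_sqrt.continuousOn fun c hc ↦ (sqrt_pos.mpr hc).ne')
  set s := (1 - t) / π
  have hs : 0 < s := div_pos (by linarith) pi_pos
  have hsmall : t < J (s ^ 2) := by
    rw [← hJ (by positivity : 0 < s ^ 2)]
    dsimp only
    rw [sqrt_sq hs.le]
    have : s * arctan (1 / s) < s * (π / 2) := mul_lt_mul_of_pos_left (arctan_lt_pi_div_two _) hs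
    have : s * π = 1 - t := div_mul_cancel₀ _ pi_ne_zero
    linarith
  have hlarge : J (1 / t) < t :=
    calc J (1 / t) ≤ 1 / (3 * (1 / t)) := integral_sq_div_add_sq_le (by positivity)
      _ = t / 3 := by field_simp
      _ < t := by linarith
  have hlt : s ^ 2 < 1 / t :=
    (strictAntiOn_integral_sq_div_add_sq.lt_iff_gt (show 0 < 1 / t by positivity)
      (show 0 < s ^ 2 by positivity)).mp (hlarge.trans hsmall)
  obtain ⟨c, hc, hJc⟩ := intermediate_value_Icc' hlt.le
    (hcont.mono fun c hc ↦ lt_of_lt_of_le (by positivity) hc.1) ⟨hlarge.le, hsmall.le⟩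
  have hc₀ : 0 < c := lt_of_lt_of_le (by positivity) hc.1
  exact ⟨c, ⟨hc₀, hJc⟩, fun c' ⟨hc', hJc'⟩ ↦
    strictAntiOn_integral_sq_div_add_sq.injOn hc' hc₀ (hJc'.trans hJc.symm)⟩

/-- For `Ω = B₁(0) ⊂ ℝ³`, `a(x) = 1 - ‖x‖²` and `ρ > 1/(4π)`, there is a unique
`λ_p < -1` with `ρ∫_Ω dx/(-λ_p - a(x)) = 1`, and then `φ_p = ρ/(-λ_p - a)` is a
positive continuous eigenfunction: `ρ∫_Ω φ_p + (a + λ_p)φ_p = 0` on `Ω̄`. -/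
theorem stmt12 (ρ : ℝ) (hρ : 1 / (4 * Real.pi) < ρ) :
    (∃! l : ℝ, l < -1 ∧
      ρ * (∫ x in ball (0 : EuclideanSpace ℝ (Fin 3)) 1, 1 / (-l - (1 - ‖x‖ ^ 2))) = 1) ∧
    ∀ l : ℝ, l < -1 →
      ρ * (∫ x in ball (0 : EuclideanSpace ℝ (Fin 3)) 1, 1 / (-l - (1 - ‖x‖ ^ 2))) = 1 →
      ContinuousOn (fun x : EuclideanSpace ℝ (Fin 3) => ρ / (-l - (1 - ‖x‖ ^ 2)))
        (closure (ball (0 : EuclideanSpace ℝ (Fin 3)) 1)) ∧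
      (∀ x ∈ closure (ball (0 : EuclideanSpace ℝ (Fin 3)) 1),
        0 < ρ / (-l - (1 - ‖x‖ ^ 2))) ∧
      (∫ x in ball (0 : EuclideanSpace ℝ (Fin 3)) 1, ρ / (-l - (1 - ‖x‖ ^ 2))) = 1 ∧
      ∀ x ∈ closure (ball (0 : EuclideanSpace ℝ (Fin 3)) 1),
        ρ * (∫ y in ball (0 : EuclideanSpace ℝ (Fin 3)) 1, ρ / (-l - (1 - ‖y‖ ^ 2))) +
          ((1 - ‖x‖ ^ 2) + l) * (ρ / (-l - (1 - ‖x‖ ^ 2))) = 0 := by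
  have hρ₀ : 0 < ρ := lt_of_le_of_lt (by positivity) hρ
  have hk : 1 < 4 * π * ρ := by rwa [div_lt_iff₀ (by positivity), mul_comm] at hρ
  have hden : ∀ l : ℝ, l < -1 → ∀ x : EuclideanSpace ℝ (Fin 3), 0 < -l - (1 - ‖x‖ ^ 2) :=
    fun l hl x ↦ by nlinarith [sq_nonneg ‖x‖]
  have hcrit : ∀ l : ℝ,
      ρ * (∫ x in ball (0 : EuclideanSpace ℝ (Fin 3)) 1, 1 / (-l - (1 - ‖x‖ ^ 2))) = 1 ↔
        ∫ r in (0 : ℝ)..1, r ^ 2 / ((-l - 1) + r ^ 2) = 1 / (4 * π * ρ) := by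
    intro l
    have hshift : ∀ x : EuclideanSpace ℝ (Fin 3), -l - (1 - ‖x‖ ^ 2) = (-l - 1) + ‖x‖ ^ 2 :=
      fun x ↦ by ring
    simp_rw [hshift, integral_ball_fin_three_inv_add_norm_sq,
      eq_div_iff (by positivity : 4 * π * ρ ≠ 0)]
    constructor <;> intro h <;> linarith
  obtain ⟨c, ⟨hc, hJc⟩, hunique⟩ := existsUnique_pos_integral_sq_div_add_sq_eq
    (t := 1 / (4 * π * ρ)) (by positivity) ((div_lt_one (by positivity)).mpr hk)
  refine ⟨⟨-1 - c, ⟨by linarith, (hcrit _).mpr (by rwa [show -(-1 - c) - 1 = c by ring])⟩,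
    fun l ⟨hl, h⟩ ↦ ?_⟩, fun l hl h ↦ ?_⟩
  · linarith [hunique (-l - 1) ⟨by linarith, (hcrit l).mp h⟩]
  have hint : ∫ x in ball (0 : EuclideanSpace ℝ (Fin 3)) 1, ρ / (-l - (1 - ‖x‖ ^ 2)) = 1 := by
    simp_rw [div_eq_mul_one_div ρ]
    rwa [MeasureTheory.integral_const_mul]
  refine ⟨(continuous_const.div (by fun_prop) fun x ↦ (hden l hl x).ne').continuousOn,
    fun x _ ↦ div_pos hρ₀ (hden l hl x), hint, fun x _ ↦ ?_⟩
  rw [hint]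
  field_simp [(hden l hl x).ne']
  ring
end

section
/- Let Ω = B₁(0) ⊂ ℝ³, a(x) = 1 − ‖x‖², and ρ = 1/(4π). Then the function φ_p(x) = ρ/‖x‖² belongs to L¹(Ω), is positive almost everywhere, satisfies ∫_Ω φ_p = 1, and solves ρ∫_Ω φ_p(y) dy + (a(x) − 1) φ_p(x) = 0 for every x ∈ Ω \ {0}; i.e. φ_p is a positive L¹ eigenfunction associated to λ_p = −1 = −max_{Ω̄} a, and it is singular (unbounded) at x = 0. -/
/-!
In polar coordinates on an `n`-dimensional space, `dx = n |B₁| r^(n-1) dr dσ`, so `‖x‖^(1-n)`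
has constant radial density and integrates to `n |B₁| r` over `B_r`. In `ℝ³` this is `4π`,
which `ρ = 1/(4π)` normalises to `1`; the eigenvalue equation is then `ρ - ‖x‖² ρ/‖x‖² = 0`.
-/

open MeasureTheory Set Metric Module Filter Topology

section RadialSingularity

variable {E : Type*} [NormedAddCommGroup E] [NormedSpace ℝ E] [FiniteDimensional ℝ E]
  [MeasurableSpace E] [BorelSpace E] [Nontrivial E] (μ : Measure E) [μ.IsAddHaarMeasure]

lemma integrableOn_ball_inv_norm_pow_finrank_sub_one (r : ℝ) :
    IntegrableOn (fun x : E => (‖x‖ ^ (finrank ℝ E - 1))⁻¹) (ball 0 r) μ := by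
  rw [integrableOn_fun_norm_addHaar μ (f := fun y : ℝ => (y ^ (finrank ℝ E - 1))⁻¹)]
  refine (integrableOn_const (C := (1 : ℝ)) measure_Ioo_lt_top.ne).congr_fun
    (fun y hy => ?_) measurableSet_Ioo
  simp [mul_inv_cancel₀ (pow_ne_zero _ (mem_Ioo.1 hy).1.ne')]

lemma setIntegral_ball_inv_norm_pow_finrank_sub_one {r : ℝ} (hr : 0 ≤ r) :
    ∫ x in ball 0 r, (‖x‖ ^ (finrank ℝ E - 1))⁻¹ ∂μ = finrank ℝ E * μ.real (ball 0 1) * r := by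
  set f : ℝ → ℝ := (Iio r).indicator fun y => (y ^ (finrank ℝ E - 1))⁻¹
  have h_ball : ∫ x in ball 0 r, (‖x‖ ^ (finrank ℝ E - 1))⁻¹ ∂μ = ∫ x, f ‖x‖ ∂μ := by
    rw [← integral_indicator measurableSet_ball]
    congr 1 with x
    simp [f, indicator]
  have h_radial : ∫ y in Ioi (0 : ℝ), y ^ (finrank ℝ E - 1) • f y = r := by
    have h_eq : EqOn (fun y : ℝ => y ^ (finrank ℝ E - 1) • f y) ((Iio r).indicator 1) (Ioi 0) :=
      fun y hy => by
        by_cases hyr : y < r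
        · simp [f, hyr, mul_inv_cancel₀ (pow_ne_zero _ hy.out.ne')]
        · simp [f, hyr]
    rw [setIntegral_congr_fun measurableSet_Ioi h_eq, setIntegral_indicator measurableSet_Iio,
      Ioi_inter_Iio]
    simp [hr]
  rw [h_ball, integral_fun_norm_addHaar, h_radial, nsmul_eq_mul, smul_eq_mul, mul_assoc]

end RadialSingularity

lemma exists_mem_ball_ne_zero_lt_div_norm_pow {E : Type*} [NormedAddCommGroup E]
    [NormedSpace ℝ E] [Nontrivial E] {ρ r : ℝ} (hρ : 0 < ρ) (hr : 0 < r) {n : ℕ} (hn : n ≠ 0)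
    (M : ℝ) : ∃ x ∈ ball (0 : E) r, x ≠ 0 ∧ M < ρ / ‖x‖ ^ n := by
  have h_blowup : Tendsto (fun t : ℝ => ρ / t ^ n) (𝓝[>] 0) atTop := by
    simpa [div_eq_mul_inv, inv_pow] using
      ((tendsto_pow_atTop hn).comp tendsto_inv_nhdsGT_zero).const_mul_atTop hρ
  obtain ⟨t, ⟨ht_pos, ht_r⟩, hMt⟩ :=
    (Filter.Eventually.and (Ioo_mem_nhdsGT hr) (h_blowup.eventually_gt_atTop M)).exists
  obtain ⟨x, rfl⟩ := exists_norm_eq E ht_pos.le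
  exact ⟨x, mem_ball_zero_iff.2 ht_r, norm_pos_iff.1 ht_pos, hMt⟩

lemma integrableOn_ball_inv_norm_sq_fin_three (r : ℝ) :
    IntegrableOn (fun x : EuclideanSpace ℝ (Fin 3) => (‖x‖ ^ 2)⁻¹) (ball 0 r) := by
  simpa using integrableOn_ball_inv_norm_pow_finrank_sub_one
    (volume : Measure (EuclideanSpace ℝ (Fin 3))) r

lemma setIntegral_ball_inv_norm_sq_fin_three {r : ℝ} (hr : 0 ≤ r) :
    ∫ x in ball (0 : EuclideanSpace ℝ (Fin 3)) r, (‖x‖ ^ 2)⁻¹ = 4 * Real.pi * r := by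
  have := setIntegral_ball_inv_norm_pow_finrank_sub_one
    (volume : Measure (EuclideanSpace ℝ (Fin 3))) hr
  rw [finrank_euclideanSpace_fin] at this
  rw [this, Measure.real, EuclideanSpace.volume_ball_fin_three, ENNReal.ofReal_one, one_pow,
    one_mul, ENNReal.toReal_ofReal (by positivity)]
  push_cast
  ring

/-- For `Ω = B₁(0) ⊂ ℝ³`, `a(x) = 1 - ‖x‖²` and `ρ = 1/(4π)`, the function
`φ_p = ρ/‖x‖²` is a positive `L¹` eigenfunction associated to `λ_p = -1`:
it is integrable, a.e. positive, of integral `1`, solves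
`ρ∫_Ω φ_p + (a(x) - 1)φ_p(x) = 0` away from `0`, and is unbounded at `0`. -/
theorem stmt13 (ρ : ℝ) (hρ : ρ = 1 / (4 * Real.pi)) :
    IntegrableOn (fun x : EuclideanSpace ℝ (Fin 3) => ρ / ‖x‖ ^ 2)
      (ball (0 : EuclideanSpace ℝ (Fin 3)) 1) ∧
    (∀ᵐ x ∂(volume.restrict (ball (0 : EuclideanSpace ℝ (Fin 3)) 1)),
      0 < ρ / ‖x‖ ^ 2) ∧
    (∫ x in ball (0 : EuclideanSpace ℝ (Fin 3)) 1, ρ / ‖x‖ ^ 2) = 1 ∧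
    (∀ x ∈ ball (0 : EuclideanSpace ℝ (Fin 3)) 1, x ≠ 0 →
      ρ * (∫ y in ball (0 : EuclideanSpace ℝ (Fin 3)) 1, ρ / ‖y‖ ^ 2) +
        ((1 - ‖x‖ ^ 2) - 1) * (ρ / ‖x‖ ^ 2) = 0) ∧
    ∀ M : ℝ, ∃ x ∈ ball (0 : EuclideanSpace ℝ (Fin 3)) 1, x ≠ 0 ∧ M < ρ / ‖x‖ ^ 2 := by
  have hρ_pos : 0 < ρ := by rw [hρ]; positivity
  have h_total : ∫ x in ball (0 : EuclideanSpace ℝ (Fin 3)) 1, ρ / ‖x‖ ^ 2 = 1 := by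
    simp_rw [div_eq_mul_inv]
    rw [integral_const_mul, setIntegral_ball_inv_norm_sq_fin_three zero_le_one, hρ]
    field_simp
  refine ⟨?_, ?_, h_total, fun x _ hx => ?_,
    exists_mem_ball_ne_zero_lt_div_norm_pow hρ_pos one_pos two_ne_zero⟩
  · simp_rw [div_eq_mul_inv]
    exact (integrableOn_ball_inv_norm_sq_fin_three 1).const_mul ρ
  · filter_upwards [ae_restrict_of_ae (compl_mem_ae_iff.2 (measure_singleton 0))] with x hx
    exact div_pos hρ_pos (pow_pos (norm_pos_iff.2 hx) 2)
  · rw [h_total]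
    field_simp [norm_ne_zero_iff.2 hx]
    ring
end

section
/- Let Ω = B₁(0) ⊂ ℝ³, a(x) = 1 − ‖x‖², and 0 < ρ < 1/(4π). Then there is no L¹ eigenfunction: there exist no λ ∈ ℝ and u ∈ L¹(Ω) with u > 0 almost everywhere and ∫_Ω u > 0 such that ρ∫_Ω u(y) dy + (a(x) + λ) u(x) = 0 for almost every x ∈ Ω. -/
/-!
Since `u > 0` and `ρ ∫_Ω u > 0`, the equation forces `a(x) + λ < 0` and
`u(x) = ρ ∫_Ω u / (‖x‖² + c)` a.e. with `c = -1 - λ`; letting `x → 0` gives `c ≥ 0`.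
Integrating over `Ω` and cancelling `∫_Ω u > 0` yields
`1 = ρ ∫_Ω (‖x‖² + c)⁻¹ ≤ ρ ∫_Ω ‖x‖⁻² = 4πρ < 1`.
-/

open MeasureTheory Set Metric

section

variable {E F : Type*} [NormedAddCommGroup E] [NormedSpace ℝ E] [MeasurableSpace E] [BorelSpace E]
  [FiniteDimensional ℝ E] [Nontrivial E] [NormedAddCommGroup F] [NormedSpace ℝ F]

theorem integral_ball_fun_norm_addHaar (μ : Measure E) [μ.IsAddHaarMeasure] (f : ℝ → F) (r : ℝ) :
    ∫ x in ball 0 r, f ‖x‖ ∂μ = Module.finrank ℝ E • μ.real (ball 0 1) •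
      ∫ y in Ioo 0 r, y ^ (Module.finrank ℝ E - 1) • f y := by
  have key := integral_fun_norm_addHaar μ ((Iio r).indicator f)
  have hball : (fun x : E ↦ (Iio r).indicator f ‖x‖) = (ball 0 r).indicator (f ‖·‖) := by
    ext x
    by_cases hx : ‖x‖ < r <;> simp [indicator, hx]
  rw [hball, integral_indicator measurableSet_ball] at key
  rw [key]
  simp_rw [← indicator_smul_apply (Iio r) (fun y : ℝ ↦ y ^ (Module.finrank ℝ E - 1)) f]
  rw [setIntegral_indicator measurableSet_Iio, Ioi_inter_Iio]

end

theorem integral_ball_inv_norm_sq_add_le {c : ℝ} (hc : 0 ≤ c) :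
    ∫ x in ball (0 : EuclideanSpace ℝ (Fin 3)) 1, (‖x‖ ^ 2 + c)⁻¹ ≤ 4 * Real.pi := by
  have hradial : ∫ y in Ioo (0 : ℝ) 1, y ^ 2 * (y ^ 2 + c)⁻¹ ≤ 1 := by
    have := norm_setIntegral_le_of_norm_le_const (μ := volume) (C := 1) (s := Ioo (0 : ℝ) 1)
      (f := fun y ↦ y ^ 2 * (y ^ 2 + c)⁻¹) measure_Ioo_lt_top fun y hy ↦ by
        have hy2 : 0 < y ^ 2 := pow_pos hy.1 2
        rw [Real.norm_of_nonneg (by positivity), mul_inv_le_iff₀ (by positivity), one_mul]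
        linarith
    simpa using (le_abs_self _).trans this
  rw [integral_ball_fun_norm_addHaar volume (fun y ↦ (y ^ 2 + c)⁻¹), finrank_euclideanSpace_fin,
    measureReal_def, EuclideanSpace.volume_ball_fin_three]
  simp only [ENNReal.ofReal_one, one_pow, one_mul, nsmul_eq_mul, smul_eq_mul]
  rw [ENNReal.toReal_ofReal (by positivity)]
  linarith [mul_le_mul_of_nonneg_left hradial (by positivity : (0 : ℝ) ≤ Real.pi * 4)]

theorem exists_mem_of_ae_restrict_of_isOpen {X : Type*} [TopologicalSpace X] [MeasurableSpace X]
    [OpensMeasurableSpace X] {μ : Measure X} [μ.IsOpenPosMeasure] {U : Set X} {p : X → Prop}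
    (hp : ∀ᵐ x ∂μ.restrict U, p x) (hU : IsOpen U) (hne : U.Nonempty) : ∃ x ∈ U, p x := by
  have : (ae (μ.restrict U)).NeBot := ae_restrict_neBot.2 (hU.measure_ne_zero μ hne)
  exact ((ae_restrict_mem₀ hU.nullMeasurableSet).and hp).exists

theorem neg_and_eq_div_neg_of_add_mul_eq_zero {K a u : ℝ} (hK : 0 < K) (hu : 0 < u)
    (h : K + a * u = 0) : a < 0 ∧ u = K / -a := by
  have ha : a < 0 := by nlinarith
  exact ⟨ha, by rw [eq_div_iff (by linarith)]; linarith⟩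

/-- For `Ω = B₁(0) ⊂ ℝ³`, `a(x) = 1 - ‖x‖²` and `0 < ρ < 1/(4π)`, there is no
positive `L¹` eigenfunction: no `λ ∈ ℝ` and `u ∈ L¹(Ω)`, `u > 0` a.e. with
`∫_Ω u > 0`, satisfy `ρ∫_Ω u + (a(x) + λ)u(x) = 0` a.e. on `Ω`. -/
theorem stmt14 (ρ : ℝ) (hρ0 : 0 < ρ) (hρ : ρ < 1 / (4 * Real.pi)) :
    ¬ ∃ (l : ℝ) (u : EuclideanSpace ℝ (Fin 3) → ℝ),
        IntegrableOn u (ball (0 : EuclideanSpace ℝ (Fin 3)) 1) ∧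
        (∀ᵐ x ∂(volume.restrict (ball (0 : EuclideanSpace ℝ (Fin 3)) 1)), 0 < u x) ∧
        0 < (∫ x in ball (0 : EuclideanSpace ℝ (Fin 3)) 1, u x) ∧
        (∀ᵐ x ∂(volume.restrict (ball (0 : EuclideanSpace ℝ (Fin 3)) 1)),
          ρ * (∫ y in ball (0 : EuclideanSpace ℝ (Fin 3)) 1, u y) +
            ((1 - ‖x‖ ^ 2) + l) * u x = 0) := by
  rintro ⟨l, u, -, hpos, hM, heq⟩
  set M := ∫ x in ball (0 : EuclideanSpace ℝ (Fin 3)) 1, u x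
  have hsol : ∀ᵐ x ∂(volume.restrict (ball (0 : EuclideanSpace ℝ (Fin 3)) 1)),
      (1 - ‖x‖ ^ 2) + l < 0 ∧ u x = ρ * M / -((1 - ‖x‖ ^ 2) + l) := by
    filter_upwards [hpos, heq] with x hx hex
    exact neg_and_eq_div_neg_of_add_mul_eq_zero (mul_pos hρ0 hM) hx hex
  have hl : l ≤ -1 := by
    by_contra! hl
    let V := ball (0 : EuclideanSpace ℝ (Fin 3)) 1 ∩ {x | 0 < (1 - ‖x‖ ^ 2) + l}
    have hV : IsOpen V := isOpen_ball.inter (isOpen_lt continuous_const (by fun_prop))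
    have h0V : (0 : EuclideanSpace ℝ (Fin 3)) ∈ V := ⟨mem_ball_self one_pos, by simp; linarith⟩
    obtain ⟨x, ⟨-, hx⟩, hneg⟩ := exists_mem_of_ae_restrict_of_isOpen
      (ae_restrict_of_ae_restrict_of_subset inter_subset_left (hsol.mono fun _ h ↦ h.1)) hV ⟨0, h0V⟩
    exact hx.not_gt hneg
  set I := ∫ x in ball (0 : EuclideanSpace ℝ (Fin 3)) 1, (‖x‖ ^ 2 + (-1 - l))⁻¹
  have hMI : M = ρ * M * I := by
    rw [← integral_const_mul]
    refine integral_congr_ae (hsol.mono fun x hx ↦ ?_)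
    rw [hx.2, div_eq_mul_inv]
    ring_nf
  have hρI : ρ * I = 1 := mul_left_cancel₀ hM.ne' (by linarith)
  have hI : I ≤ 4 * Real.pi := integral_ball_inv_norm_sq_add_le (by linarith)
  have h4π : ρ * (4 * Real.pi) < 1 := by rwa [lt_div_iff₀ (by positivity)] at hρ
  linarith [mul_le_mul_of_nonneg_left hI hρ0.le]
end

section
/- Let Ω = B₁(0) ⊂ ℝ³, a(x) = 1 − ‖x‖², 0 < ρ < 1/(4π), and set α = 1/ρ − 4π > 0. Then the positive Borel measure μ := α δ₀ + (1/‖x‖²) dx on Ω̄ solves the spectral problem at λ_p = −1: for every Borel set A ⊆ Ω̄, ρ μ(Ω̄) · Leb(A ∩ Ω) = ∫_A ‖x‖² dμ(x). -/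
/-!
In polar coordinates the density `‖x‖⁻²` cancels the Jacobian `r²` of `ℝ³`, so the absolutely
continuous part of `μ` has mass `4π` on the unit ball and `μ(Ω̄) = α + 4π = 1/ρ`. Against `μ`, the
weight `‖x‖²` kills the atom at the origin and turns the density into `1` off the origin, so
`∫_A ‖x‖² dμ = Leb(A ∩ Ω)`.
-/

open MeasureTheory Set Metric Module
open scoped ENNReal Real

namespace MeasureTheory

section Radial

variable {E : Type*} [NormedAddCommGroup E] [NormedSpace ℝ E] [Nontrivial E]
  [FiniteDimensional ℝ E] [MeasurableSpace E] [BorelSpace E] (μ : Measure E) [μ.IsAddHaarMeasure]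

theorem lintegral_fun_norm_addHaar {f : ℝ → ℝ≥0∞} (hf : Measurable f) :
    ∫⁻ x, f ‖x‖ ∂μ = finrank ℝ E * μ (ball 0 1) *
      ∫⁻ y in Ioi (0 : ℝ), ENNReal.ofReal (y ^ (finrank ℝ E - 1)) * f y := by
  have hf_snd : Measurable fun z : sphere (0 : E) 1 × Ioi (0 : ℝ) ↦ f z.2 :=
    hf.comp (measurable_subtype_coe.comp measurable_snd)
  calc ∫⁻ x, f ‖x‖ ∂μ = ∫⁻ x : ({0}ᶜ : Set E), f ‖x.1‖ ∂(μ.comap (↑)) := by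
        rw [lintegral_subtype_comap (measurableSet_singleton _).compl fun x ↦ f ‖x‖,
          restrict_compl_singleton]
    _ = ∫⁻ z, f z.2 ∂μ.toSphere.prod (.volumeIoiPow (finrank ℝ E - 1)) := by
        rw [← μ.measurePreserving_homeomorphUnitSphereProd.lintegral_comp hf_snd]
        simp only [homeomorphUnitSphereProd_apply_snd_coe]
    _ = μ.toSphere univ * ∫⁻ y, f y ∂.volumeIoiPow (finrank ℝ E - 1) := by
        rw [lintegral_prod _ hf_snd.aemeasurable]
        simp only [lintegral_const, mul_comm]
    _ = _ := by
        rw [Measure.volumeIoiPow, μ.toSphere_apply_univ,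
          ← lintegral_subtype_comap measurableSet_Ioi fun y ↦ ENNReal.ofReal (y ^ _) * f y]
        exact congrArg _ (lintegral_withDensity_eq_lintegral_mul _
          (measurable_subtype_coe.pow_const _).ennreal_ofReal (hf.comp measurable_subtype_coe))

theorem setLIntegral_ball_fun_norm_addHaar {f : ℝ → ℝ≥0∞} (hf : Measurable f) (r : ℝ) :
    ∫⁻ x in ball 0 r, f ‖x‖ ∂μ = finrank ℝ E * μ (ball 0 1) *
      ∫⁻ y in Ioo 0 r, ENNReal.ofReal (y ^ (finrank ℝ E - 1)) * f y := by
  rw [← lintegral_indicator measurableSet_ball, ← Iio_inter_Ioi,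
    ← Measure.restrict_restrict measurableSet_Iio, ← lintegral_indicator measurableSet_Iio]
  convert lintegral_fun_norm_addHaar μ (hf.indicator (measurableSet_Iio (a := r))) using 3 <;>
    simp [indicator]

end Radial

theorem setLIntegral_smul_dirac_of_eq_zero {α : Type*} [MeasurableSpace α] {g : α → ℝ≥0∞}
    (hg : Measurable g) {a : α} (hga : g a = 0) (c : ℝ≥0∞) (s : Set α) :
    ∫⁻ x in s, g x ∂(c • Measure.dirac a) = 0 :=
  nonpos_iff_eq_zero.1 <| (setLIntegral_le_lintegral s g).trans_eq <| by
    rw [lintegral_smul_measure, lintegral_dirac' a hg, hga, smul_zero]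

section InverseSquareDensity

variable {E : Type*} [NormedAddCommGroup E] [MeasurableSpace E] [OpensMeasurableSpace E]
  (μ : Measure E) [NullSingletonClass μ]

theorem setLIntegral_norm_sq_withDensity_inv_norm_sq {s : Set E} (hs : MeasurableSet s) :
    ∫⁻ x in s, ENNReal.ofReal (‖x‖ ^ 2) ∂μ.withDensity (fun x ↦ ENNReal.ofReal (1 / ‖x‖ ^ 2)) =
      μ s := by
  rw [setLIntegral_withDensity_eq_setLIntegral_mul _ (by fun_prop) (by fun_prop) hs,
    ← setLIntegral_one]
  refine setLIntegral_congr_fun_ae hs ?_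
  filter_upwards [measure_eq_zero_iff_ae_notMem.1 (measure_singleton (μ := μ) 0)] with x hx _
  have hx : 0 < ‖x‖ ^ 2 := pow_pos (norm_pos_iff.2 hx) 2
  rw [Pi.mul_apply, ← ENNReal.ofReal_mul (by positivity), one_div_mul_cancel hx.ne',
    ENNReal.ofReal_one]

theorem setIntegral_norm_sq_smul_dirac_add_withDensity_inv_norm_sq (c : ℝ≥0∞) (t : Set E)
    {s : Set E} (hs : MeasurableSet s) :
    ∫ x in s, ‖x‖ ^ 2 ∂(c • Measure.dirac 0 +
      (μ.restrict t).withDensity fun x ↦ ENNReal.ofReal (1 / ‖x‖ ^ 2)) = (μ (s ∩ t)).toReal := by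
  rw [integral_eq_lintegral_of_nonneg_ae (.of_forall fun x ↦ by positivity) (by fun_prop),
    Measure.restrict_add, lintegral_add_measure,
    setLIntegral_smul_dirac_of_eq_zero (by fun_prop) (by simp),
    setLIntegral_norm_sq_withDensity_inv_norm_sq _ hs, Measure.restrict_apply hs, zero_add]

end InverseSquareDensity

end MeasureTheory

theorem setLIntegral_ball_inv_norm_sq_fin_three (r : ℝ) :
    ∫⁻ x in ball (0 : EuclideanSpace ℝ (Fin 3)) r, ENNReal.ofReal (1 / ‖x‖ ^ 2) =
      ENNReal.ofReal (4 * π * r) := by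
  have radial : ∫⁻ y in Ioo 0 r, ENNReal.ofReal (y ^ 2) * ENNReal.ofReal (1 / y ^ 2) =
      ENNReal.ofReal r := by
    rw [setLIntegral_congr_fun measurableSet_Ioo fun y hy ↦ ?_, setLIntegral_one, Real.volume_Ioo,
      sub_zero]
    rw [← ENNReal.ofReal_mul (sq_nonneg y), mul_one_div_cancel (pow_pos hy.1 2).ne',
      ENNReal.ofReal_one]
  rw [setLIntegral_ball_fun_norm_addHaar volume (f := fun y ↦ ENNReal.ofReal (1 / y ^ 2))
      (by fun_prop), finrank_euclideanSpace_fin, radial, EuclideanSpace.volume_ball_fin_three,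
    ENNReal.ofReal_one, one_pow, one_mul, mul_assoc, ← ENNReal.ofReal_mul (by positivity),
    ← ENNReal.ofReal_natCast, ← ENNReal.ofReal_mul (by positivity)]
  congr 1
  push_cast
  ring

theorem smul_dirac_add_withDensity_inv_norm_sq_closure_unitBall (c : ℝ≥0∞) :
    (c • Measure.dirac (0 : EuclideanSpace ℝ (Fin 3)) +
      (volume.restrict (ball (0 : EuclideanSpace ℝ (Fin 3)) 1)).withDensity
        (fun x ↦ ENNReal.ofReal (1 / ‖x‖ ^ 2))) (closure (ball 0 1)) =
      c + ENNReal.ofReal (4 * π) := by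
  have hclosed : MeasurableSet (closure (ball (0 : EuclideanSpace ℝ (Fin 3)) 1)) :=
    isClosed_closure.measurableSet
  rw [Measure.add_apply, Measure.smul_apply,
    Measure.dirac_apply_of_mem (subset_closure (mem_ball_self one_pos)), smul_eq_mul, mul_one,
    withDensity_apply _ hclosed, Measure.restrict_restrict hclosed,
    inter_eq_right.2 subset_closure, setLIntegral_ball_inv_norm_sq_fin_three, mul_one]

/-- For `Ω = B₁(0) ⊂ ℝ³`, `a(x) = 1 - ‖x‖²`, `0 < ρ < 1/(4π)` and `α = 1/ρ - 4π`,
the positive measure `μ = α δ₀ + (1/‖x‖²) dx` solves the spectral problem at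
`λ_p = -1`: `ρ μ(Ω̄) Leb(A ∩ Ω) = ∫_A ‖x‖² dμ` for every Borel `A ⊆ Ω̄`. -/
theorem stmt15 (ρ α : ℝ) (hρ0 : 0 < ρ) (hρ : ρ < 1 / (4 * Real.pi))
    (hα : α = 1 / ρ - 4 * Real.pi) :
    0 < α ∧
    ∀ A : Set (EuclideanSpace ℝ (Fin 3)), MeasurableSet A →
      A ⊆ closure (ball (0 : EuclideanSpace ℝ (Fin 3)) 1) →
      ρ * ((ENNReal.ofReal α • Measure.dirac (0 : EuclideanSpace ℝ (Fin 3)) +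
            (volume.restrict (ball (0 : EuclideanSpace ℝ (Fin 3)) 1)).withDensity
              (fun x => ENNReal.ofReal (1 / ‖x‖ ^ 2)))
            (closure (ball (0 : EuclideanSpace ℝ (Fin 3)) 1))).toReal *
          (volume (A ∩ ball (0 : EuclideanSpace ℝ (Fin 3)) 1)).toReal =
        ∫ x in A, ‖x‖ ^ 2
          ∂(ENNReal.ofReal α • Measure.dirac (0 : EuclideanSpace ℝ (Fin 3)) +
            (volume.restrict (ball (0 : EuclideanSpace ℝ (Fin 3)) 1)).withDensity
              (fun x => ENNReal.ofReal (1 / ‖x‖ ^ 2))) := by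
  have hα0 : 0 < α := hα ▸ sub_pos.2 ((lt_one_div hρ0 (by positivity)).1 hρ)
  refine ⟨hα0, fun A hA _ ↦ ?_⟩
  have total_mass : (ENNReal.ofReal α + ENNReal.ofReal (4 * π)).toReal = 1 / ρ := by
    rw [← ENNReal.ofReal_add hα0.le (by positivity), ENNReal.toReal_ofReal (by positivity), hα,
      sub_add_cancel]
  rw [setIntegral_norm_sq_smul_dirac_add_withDensity_inv_norm_sq volume _ _ hA,
    smul_dirac_add_withDensity_inv_norm_sq_closure_unitBall, total_mass,
    mul_one_div_cancel hρ0.ne', one_mul]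
end

section
/- Let Ω = B₁(0) × (0,1) ⊂ ℝ³ (B₁(0) the open unit disc of ℝ²), a(x) = 1 − √(x₁²+x₂²), 0 < ρ < 1/(2π), and α = 1/ρ − 2π > 0. Then for every t ∈ (0,1) the positive Borel measure μ_t := α δ_{(0,0,t)} + (1/√(x₁²+x₂²)) dx solves the spectral problem at λ_p = −1: for every Borel set A ⊆ Ω̄, ρ μ_t(Ω̄) · Leb(A ∩ Ω) = ∫_A √(x₁²+x₂²) dμ_t(x). In particular, distinct t give non-proportional measures, so there are infinitely many positive measure solutions. -/
open MeasureTheory Set Metric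

/-- The open unit cylinder `B₁(0) × (0,1) ⊂ ℝ³`. -/
def cylinder : Set (EuclideanSpace ℝ (Fin 3)) :=
  {x | x 0 ^ 2 + x 1 ^ 2 < 1 ∧ x 2 ∈ Set.Ioo (0 : ℝ) 1}

/-- The axis point `(0,0,t)` of the cylinder. -/
def axisPt (t : ℝ) : EuclideanSpace ℝ (Fin 3) := WithLp.toLp 2 ![0, 0, t]

/-!
Write `r(x) = √(x₁² + x₂²)` for the distance to the axis. The weight `r` cancels the density
`1 / r` of the absolutely continuous part of `μ_t`, and the Dirac part sees nothing because
`r` vanishes on the axis; hence `∫_A r dμ_t = Leb(A ∩ Ω)`. In polar coordinates the Jacobian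
`r` cancels `1 / r` as well, so `∫_Ω dx / r = 2π · 1` and `μ_t(Ω̄) = α + 2π = 1 / ρ`.
Finally `μ_t` has an atom at `(0,0,t)` which `c • μ_{t'}` lacks for `t' ≠ t`.
-/

open scoped ENNReal

theorem polarCoord_symm_sq_add_sq (p : ℝ × ℝ) :
    (polarCoord.symm p).1 ^ 2 + (polarCoord.symm p).2 ^ 2 = p.1 ^ 2 := by
  simp only [polarCoord_symm_apply]
  linear_combination p.1 ^ 2 * Real.cos_sq_add_sin_sq p.2

theorem lintegral_unitDisc_one_div_sqrt :
    ∫⁻ p in {p : ℝ × ℝ | p.1 ^ 2 + p.2 ^ 2 < 1},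
      ENNReal.ofReal (1 / Real.sqrt (p.1 ^ 2 + p.2 ^ 2)) = ENNReal.ofReal (2 * Real.pi) := by
  have hdisc : MeasurableSet {p : ℝ × ℝ | p.1 ^ 2 + p.2 ^ 2 < 1} :=
    measurableSet_lt (by fun_prop) measurable_const
  rw [← lintegral_indicator hdisc, ← lintegral_comp_polarCoord_symm]
  have hpolar : ∀ p ∈ polarCoord.target, ENNReal.ofReal p.1 •
      {p : ℝ × ℝ | p.1 ^ 2 + p.2 ^ 2 < 1}.indicator
        (fun p => ENNReal.ofReal (1 / Real.sqrt (p.1 ^ 2 + p.2 ^ 2))) (polarCoord.symm p) =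
      (Iio 1 ×ˢ univ).indicator 1 p := by
    rintro ⟨r, θ⟩ ⟨hr : 0 < r, -⟩
    simp only [indicator, mem_ofPred_eq, polarCoord_symm_sq_add_sq, mem_prod, mem_Iio, mem_univ,
      and_true, Real.sqrt_sq (le_of_lt hr), pow_lt_one_iff_of_nonneg hr.le two_ne_zero]
    split_ifs
    · rw [smul_eq_mul, ← ENNReal.ofReal_mul hr.le, mul_one_div_cancel hr.ne', ENNReal.ofReal_one,
        Pi.one_apply]
    · simp
  rw [setLIntegral_congr_fun polarCoord.open_target.measurableSet hpolar,
    lintegral_indicator_one (measurableSet_Iio.prod MeasurableSet.univ),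
    Measure.restrict_apply (measurableSet_Iio.prod MeasurableSet.univ), polarCoord_target,
    prod_inter_prod, Iio_inter_Ioi, univ_inter, Measure.volume_eq_prod, Measure.prod_prod,
    Real.volume_Ioo, Real.volume_Ioo, ← ENNReal.ofReal_mul (by norm_num)]
  ring_nf

def cylCoord : EuclideanSpace ℝ (Fin 3) ≃ᵐ (ℝ × ℝ) × ℝ :=
  (MeasurableEquiv.toLp 2 (Fin 3 → ℝ)).symm.trans <|
    (MeasurableEquiv.piFinSuccAbove (fun _ => ℝ) 2).trans <|
      MeasurableEquiv.prodComm.trans <| MeasurableEquiv.finTwoArrow.prodCongr (.refl ℝ)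

@[simp]
theorem cylCoord_apply (x : EuclideanSpace ℝ (Fin 3)) : cylCoord x = ((x 0, x 1), x 2) := rfl

theorem volume_preserving_cylCoord : MeasurePreserving cylCoord :=
  (((volume_preserving_finTwoArrow ℝ).prod (MeasurePreserving.id volume)).comp
    Measure.measurePreserving_swap).comp <|
      (volume_preserving_piFinSuccAbove (fun _ : Fin 3 => ℝ) 2).comp
        (EuclideanSpace.volume_preserving_symm_measurableEquiv_toLp (Fin 3))

noncomputable def axisDist (x : EuclideanSpace ℝ (Fin 3)) : ℝ := Real.sqrt (x 0 ^ 2 + x 1 ^ 2)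

theorem lintegral_cylinder_one_div_axisDist :
    ∫⁻ x in cylinder, ENNReal.ofReal (1 / axisDist x) = ENNReal.ofReal (2 * Real.pi) := by
  let f : ℝ × ℝ → ℝ≥0∞ := fun p => ENNReal.ofReal (1 / Real.sqrt (p.1 ^ 2 + p.2 ^ 2))
  calc ∫⁻ x in cylinder, ENNReal.ofReal (1 / axisDist x)
      = ∫⁻ x in cylCoord ⁻¹' ({p : ℝ × ℝ | p.1 ^ 2 + p.2 ^ 2 < 1} ×ˢ Ioo 0 1),
          f (cylCoord x).1 := rfl
    _ = ∫⁻ q in {p : ℝ × ℝ | p.1 ^ 2 + p.2 ^ 2 < 1} ×ˢ Ioo 0 1, f q.1 :=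
      volume_preserving_cylCoord.setLIntegral_comp_preimage_emb cylCoord.measurableEmbedding
        (fun q => f q.1) _
    _ = (∫⁻ p in {p : ℝ × ℝ | p.1 ^ 2 + p.2 ^ 2 < 1}, f p) * volume (Ioo (0 : ℝ) 1) := by
      rw [Measure.volume_eq_prod, ← Measure.prod_restrict,
        lintegral_prod _ (by fun_prop : Measurable fun q : (ℝ × ℝ) × ℝ => f q.1).aemeasurable]
      simp only [lintegral_const, Measure.restrict_apply_univ]
      exact lintegral_mul_const _ (by fun_prop)
    _ = ENNReal.ofReal (2 * Real.pi) := by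
      rw [lintegral_unitDisc_one_div_sqrt, Real.volume_Ioo, sub_zero, ENNReal.ofReal_one, mul_one]

theorem setLIntegral_withDensity_one_div {X : Type*} [MeasurableSpace X] {μ : Measure X}
    {f : X → ℝ} (hf : Measurable f) (hpos : ∀ᵐ x ∂μ, 0 < f x) {A : Set X}
    (hA : MeasurableSet A) :
    ∫⁻ x in A, ENNReal.ofReal (f x) ∂μ.withDensity (fun x => ENNReal.ofReal (1 / f x)) =
      μ A := by
  rw [setLIntegral_withDensity_eq_setLIntegral_mul _ (by fun_prop) (by fun_prop) hA,
    ← setLIntegral_one]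
  refine setLIntegral_congr_fun_ae hA (hpos.mono fun x hx _ => ?_)
  rw [Pi.mul_apply, ← ENNReal.ofReal_mul (by positivity), one_div_mul_cancel hx.ne',
    ENNReal.ofReal_one]

theorem smul_dirac_add_ne_smul {X : Type*} [MeasurableSpace X] [MeasurableSingletonClass X]
    {a : ℝ≥0∞} (ha : a ≠ 0) {p q : X} (hpq : p ≠ q) {ν : Measure X} (hν : ν {p} = 0)
    (c : ℝ≥0∞) : a • Measure.dirac p + ν ≠ c • (a • Measure.dirac q + ν) := by
  intro h
  have := congrArg (fun m : Measure X => m {p}) h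
  simp [hν, hpq.symm, ha] at this

theorem measurable_axisDist : Measurable axisDist := by
  unfold axisDist; fun_prop

theorem axisDist_nonneg (x : EuclideanSpace ℝ (Fin 3)) : 0 ≤ axisDist x :=
  Real.sqrt_nonneg _

theorem ae_axisDist_pos : ∀ᵐ x : EuclideanSpace ℝ (Fin 3), 0 < axisDist x := by
  have hnull : volume (cylCoord ⁻¹' ({0} ×ˢ univ)) = 0 := by
    rw [volume_preserving_cylCoord.measure_preimage_equiv, Measure.volume_eq_prod,
      Measure.prod_prod, measure_singleton, zero_mul]
  refine measure_mono_null (fun x hx => ?_) hnull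
  have hx : x 0 ^ 2 + x 1 ^ 2 ≤ 0 :=
    Real.sqrt_eq_zero'.mp (le_antisymm (not_lt.mp hx) (Real.sqrt_nonneg _))
  simp only [mem_preimage, cylCoord_apply, mem_prod, mem_singleton_iff, Prod.mk_eq_zero,
    mem_univ, and_true]
  constructor <;> nlinarith [sq_nonneg (x 0), sq_nonneg (x 1)]

theorem axisDist_axisPt (t : ℝ) : axisDist (axisPt t) = 0 := by
  simp [axisDist, axisPt]

theorem axisPt_mem_cylinder {t : ℝ} (ht : t ∈ Ioo 0 1) : axisPt t ∈ _root_.cylinder :=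
  ⟨by simp [axisPt], ht⟩

theorem axisPt_injective : Function.Injective axisPt := fun t t' h => by
  simpa [axisPt] using congrArg (fun x : EuclideanSpace ℝ (Fin 3) => x 2) h

/-- The measure `μ_t` of the statement. -/
noncomputable def axialMeasure (α t : ℝ) : Measure (EuclideanSpace ℝ (Fin 3)) :=
  ENNReal.ofReal α • Measure.dirac (axisPt t) +
    (volume.restrict cylinder).withDensity (fun x => ENNReal.ofReal (1 / axisDist x))

theorem axialMeasure_closure_cylinder (α : ℝ) {t : ℝ} (ht : t ∈ Ioo 0 1) :
    axialMeasure α t (closure cylinder) = ENNReal.ofReal α + ENNReal.ofReal (2 * Real.pi) := by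
  have hcl : MeasurableSet (closure _root_.cylinder) := isClosed_closure.measurableSet
  rw [axialMeasure, Measure.add_apply, Measure.smul_apply, smul_eq_mul,
    Measure.dirac_apply_of_mem (subset_closure (axisPt_mem_cylinder ht)), mul_one,
    withDensity_apply _ hcl, Measure.restrict_restrict hcl, inter_eq_right.mpr subset_closure,
    lintegral_cylinder_one_div_axisDist]

theorem lintegral_axisDist_axialMeasure (α t : ℝ) {A : Set (EuclideanSpace ℝ (Fin 3))}
    (hA : MeasurableSet A) :
    ∫⁻ x in A, ENNReal.ofReal (axisDist x) ∂axialMeasure α t = volume (A ∩ cylinder) := by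
  have hdirac : ∫⁻ x in A, ENNReal.ofReal (axisDist x) ∂Measure.dirac (axisPt t) = 0 :=
    nonpos_iff_eq_zero.mp <| (setLIntegral_le_lintegral _ _).trans_eq <| by
      rw [lintegral_dirac, axisDist_axisPt, ENNReal.ofReal_zero]
  rw [axialMeasure, Measure.restrict_add, lintegral_add_measure, Measure.restrict_smul,
    lintegral_smul_measure, hdirac, smul_zero, zero_add,
    setLIntegral_withDensity_one_div measurable_axisDist (ae_restrict_of_ae ae_axisDist_pos) hA,
    Measure.restrict_apply hA]

theorem integral_axisDist_axialMeasure (α t : ℝ) {A : Set (EuclideanSpace ℝ (Fin 3))}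
    (hA : MeasurableSet A) :
    ∫ x in A, axisDist x ∂axialMeasure α t = (volume (A ∩ cylinder)).toReal := by
  rw [integral_eq_lintegral_of_nonneg_ae (.of_forall axisDist_nonneg)
    measurable_axisDist.aestronglyMeasurable, lintegral_axisDist_axialMeasure α t hA]

theorem axialMeasure_ne_smul {α : ℝ} (hα : 0 < α) {t t' : ℝ} (htt' : t ≠ t') (c : ℝ≥0∞) :
    axialMeasure α t ≠ c • axialMeasure α t' := by
  refine smul_dirac_add_ne_smul (ENNReal.ofReal_pos.mpr hα).ne' (axisPt_injective.ne htt') ?_ c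
  exact withDensity_absolutelyContinuous _ _ (Measure.restrict_le_self.absolutelyContinuous
    (measure_singleton _))

/-- For the unit cylinder, `a(x) = 1 - √(x₁²+x₂²)`, `0 < ρ < 1/(2π)` and
`α = 1/ρ - 2π`, for every `t ∈ (0,1)` the measure
`μ_t = α δ_{(0,0,t)} + (1/√(x₁²+x₂²)) dx` solves the spectral problem at
`λ_p = -1`, and distinct `t` give non-proportional measures. -/
theorem stmt18 (ρ α : ℝ) (hρ0 : 0 < ρ) (hρ : ρ < 1 / (2 * Real.pi))
    (hα : α = 1 / ρ - 2 * Real.pi) :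
    (∀ t ∈ Ioo (0 : ℝ) 1,
      ∀ A : Set (EuclideanSpace ℝ (Fin 3)), MeasurableSet A → A ⊆ closure cylinder →
        ρ * ((ENNReal.ofReal α • Measure.dirac (axisPt t) +
              (volume.restrict cylinder).withDensity
                (fun x => ENNReal.ofReal (1 / Real.sqrt (x 0 ^ 2 + x 1 ^ 2))))
              (closure cylinder)).toReal *
            (volume (A ∩ cylinder)).toReal =
          ∫ x in A, Real.sqrt (x 0 ^ 2 + x 1 ^ 2)
            ∂(ENNReal.ofReal α • Measure.dirac (axisPt t) +
              (volume.restrict cylinder).withDensity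
                (fun x => ENNReal.ofReal (1 / Real.sqrt (x 0 ^ 2 + x 1 ^ 2))))) ∧
    ∀ t ∈ Ioo (0 : ℝ) 1, ∀ t' ∈ Ioo (0 : ℝ) 1, t ≠ t' → ∀ c : ENNReal,
      (ENNReal.ofReal α • Measure.dirac (axisPt t) +
          (volume.restrict cylinder).withDensity
            (fun x => ENNReal.ofReal (1 / Real.sqrt (x 0 ^ 2 + x 1 ^ 2)))) ≠
        c • (ENNReal.ofReal α • Measure.dirac (axisPt t') +
          (volume.restrict cylinder).withDensity
            (fun x => ENNReal.ofReal (1 / Real.sqrt (x 0 ^ 2 + x 1 ^ 2)))) := by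
  have hα0 : 0 < α := by
    rw [hα, sub_pos, lt_one_div (by positivity) hρ0]
    exact hρ
  refine ⟨fun t ht A hA _ => ?_, fun t _ t' _ htt' c => axialMeasure_ne_smul hα0 htt' c⟩
  have hmass : (axialMeasure α t (closure cylinder)).toReal = 1 / ρ := by
    rw [axialMeasure_closure_cylinder α ht, ENNReal.toReal_add ENNReal.ofReal_ne_top
      ENNReal.ofReal_ne_top, ENNReal.toReal_ofReal hα0.le,
      ENNReal.toReal_ofReal Real.two_pi_pos.le, hα, sub_add_cancel]
  change ρ * (axialMeasure α t (closure cylinder)).toReal * _ =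
    ∫ x in A, axisDist x ∂axialMeasure α t
  rw [hmass, integral_axisDist_axialMeasure α t hA, mul_one_div_cancel hρ0.ne', one_mul]
end

section
/- Let Ω = B₁(0) × (0,1) ⊂ ℝ³ (B₁(0) the open unit disc of ℝ²), a(x) = 1 − √(x₁²+x₂²), and 0 < ρ < 1/(2π). Let ν be any nonzero finite positive Borel measure on Ω̄ whose support is contained in the axis segment Ω₀ = {(0,0,x₃) : x₃ ∈ [0,1]} (for instance a singular continuous measure on the axis with no atomic part, such as the devil's-staircase measure). Set M = ν(Ω̄)/(1 − 2πρ). Then the positive Borel measure μ := ν + (ρM/√(x₁²+x₂²)) dx solves the spectral problem at λ_p = −1: for every Borel set A ⊆ Ω̄, ρ μ(Ω̄) · Leb(A ∩ Ω) = ∫_A √(x₁²+x₂²) dμ(x). -/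
open MeasureTheory Set Metric

open scoped ENNReal

/-! Write `r(x) = √(x₁² + x₂²)` and `c = ρM`. The measure `ν` lives on the axis, where `r`
vanishes, so only the absolutely continuous part of `μ` contributes to `∫_A r dμ`, and there
`r · c / r = c` gives `c · Leb(A ∩ Ω)`. On the other side the axis segment lies in `Ω̄`, so
`μ(Ω̄) = ν(Ω̄) + c ∫_Ω dx / r = ν(Ω̄) + 2πρM = M` by the choice of `M`, and both sides
equal `c · Leb(A ∩ Ω)`. The integral `∫_Ω dx / r = 2π` splits as
`∫_{B₁(0)} dy / ‖y‖ · Leb((0,1))`, and in the plane the radial formula gives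
`∫_{B₁(0)} dy / ‖y‖ = 2 · Leb(B₁(0)) = 2π`. -/

theorem setLIntegral_ball_inv_norm_of_finrank_eq_two {E : Type*} [NormedAddCommGroup E]
    [NormedSpace ℝ E] [FiniteDimensional ℝ E] [MeasurableSpace E] [BorelSpace E]
    (μ : Measure E) [μ.IsAddHaarMeasure] (hE : Module.finrank ℝ E = 2) :
    ∫⁻ x in ball (0 : E) 1, ENNReal.ofReal ‖x‖⁻¹ ∂μ = 2 * μ (ball 0 1) := by
  have : Nontrivial E := Module.nontrivial_of_finrank_eq_succ hE
  have hone : ∀ y ∈ Ioo (0 : ℝ) 1, y ^ (Module.finrank ℝ E - 1) • y⁻¹ = 1 := fun y hy => by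
    simp [hE, hy.1.ne']
  have hint : IntegrableOn (fun x : E => ‖x‖⁻¹) (ball 0 1) μ := by
    rw [integrableOn_fun_norm_addHaar μ (f := fun y => y⁻¹)]
    exact (integrableOn_const (by simp)).congr_fun (fun y hy => (hone y hy).symm)
      measurableSet_Ioo
  have hradial : ∫ y in Ioi (0 : ℝ), y ^ (Module.finrank ℝ E - 1) • (Iio 1).indicator (·⁻¹) y
      = ∫ y in Ioi (0 : ℝ), (Iio 1).indicator 1 y := by
    refine setIntegral_congr_fun measurableSet_Ioi fun y (hy : 0 < y) => ?_
    by_cases hy1 : y < 1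
    · simpa [hy1] using hone y ⟨hy, hy1⟩
    · simp [hy1]
  rw [← ofReal_integral_eq_lintegral_ofReal hint (ae_of_all _ fun x => by positivity),
    ← integral_indicator measurableSet_ball]
  calc ENNReal.ofReal (∫ x, (ball (0 : E) 1).indicator (‖·‖⁻¹) x ∂μ)
      = ENNReal.ofReal (∫ x, (Iio 1).indicator (·⁻¹) ‖x‖ ∂μ) := by
        congr 2 with x
        by_cases hx : ‖x‖ < 1 <;> simp [indicator, hx]
    _ = 2 * μ (ball 0 1) := by
        rw [integral_fun_norm_addHaar, hradial, integral_indicator_one measurableSet_Iio, hE]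
        simp [Measure.real, Iio_inter_Ioi, ENNReal.ofReal_toReal measure_ball_lt_top.ne]

theorem setLIntegral_withDensity_div_self {α : Type*} [MeasurableSpace α] {μ : Measure α}
    {f : α → ℝ} (hf : Measurable f) (hpos : ∀ᵐ x ∂μ, 0 < f x) (c : ℝ) {s : Set α}
    (hs : MeasurableSet s) :
    ∫⁻ x in s, ENNReal.ofReal (f x) ∂μ.withDensity (fun x => ENNReal.ofReal (c / f x)) =
      ENNReal.ofReal c * μ s := by
  rw [restrict_withDensity hs, lintegral_withDensity_eq_lintegral_mul _ (by fun_prop)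
    (by fun_prop), ← setLIntegral_const]
  refine lintegral_congr_ae ((ae_restrict_of_ae hpos).mono fun x hx => ?_)
  rw [Pi.mul_apply, ← ENNReal.ofReal_mul' hx.le, div_mul_cancel₀ _ hx.ne']

def cylinderCoords (x : EuclideanSpace ℝ (Fin 3)) : EuclideanSpace ℝ (Fin 2) × ℝ :=
  (!₂[x 0, x 1], x 2)

theorem measurePreserving_cylinderCoords : MeasurePreserving cylinderCoords := by
  have h := (((PiLp.volume_preserving_toLp (Fin 2)).prod (MeasurePreserving.id volume)).comp
    Measure.measurePreserving_swap).comp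
    ((volume_preserving_piFinSuccAbove (fun _ : Fin 3 => ℝ) 2).comp
      (PiLp.volume_preserving_ofLp (Fin 3)))
  convert h using 1
  · funext x
    ext i
    · fin_cases i <;> rfl
    · rfl
  · exact Measure.volume_eq_prod _ _

theorem norm_cylinderCoords_fst (x : EuclideanSpace ℝ (Fin 3)) :
    ‖(cylinderCoords x).1‖ = √(x 0 ^ 2 + x 1 ^ 2) := by
  simp [cylinderCoords, EuclideanSpace.norm_eq, Fin.sum_univ_two]

theorem cylinder_eq_preimage_cylinderCoords :
    _root_.cylinder = cylinderCoords ⁻¹' (ball 0 1 ×ˢ Ioo 0 1) := by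
  ext x
  simp only [_root_.cylinder, mem_preimage, mem_prod, mem_ball_zero_iff,
    norm_cylinderCoords_fst, Real.sqrt_lt' one_pos, one_pow]
  rfl

theorem ae_sqrt_sq_add_sq_pos : ∀ᵐ x : EuclideanSpace ℝ (Fin 3), 0 < √(x 0 ^ 2 + x 1 ^ 2) := by
  have hnull : volume ({(0 : EuclideanSpace ℝ (Fin 2))} ×ˢ (univ : Set ℝ)) = 0 := by
    rw [Measure.volume_eq_prod, Measure.prod_prod]
    simp
  refine measure_mono_null (fun x hx => ?_) <|
    (measurePreserving_cylinderCoords.measure_preimage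
      ((measurableSet_singleton 0).prod .univ).nullMeasurableSet).trans hnull
  simpa [← norm_cylinderCoords_fst] using hx

theorem setLIntegral_cylinder_div_sqrt (c : ℝ) :
    ∫⁻ x in _root_.cylinder, ENNReal.ofReal (c / √(x 0 ^ 2 + x 1 ^ 2)) =
      ENNReal.ofReal c * ENNReal.ofReal (2 * Real.pi) := by
  simp_rw [div_eq_mul_inv, ENNReal.ofReal_mul' (inv_nonneg.2 (Real.sqrt_nonneg _))]
  rw [lintegral_const_mul _ (by fun_prop), cylinder_eq_preimage_cylinderCoords]
  simp_rw [← norm_cylinderCoords_fst]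
  rw [measurePreserving_cylinderCoords.setLIntegral_comp_preimage
      (measurableSet_ball.prod measurableSet_Ioo) (f := fun z => ENNReal.ofReal ‖z.1‖⁻¹)
      (by fun_prop),
    Measure.volume_eq_prod, ← Measure.prod_restrict, lintegral_prod _ (by fun_prop)]
  simp [setLIntegral_ball_inv_norm_of_finrank_eq_two]

def axisSegment : Set (EuclideanSpace ℝ (Fin 3)) :=
  {x | x 0 = 0 ∧ x 1 = 0 ∧ x 2 ∈ Icc (0 : ℝ) 1}

theorem axisSegment_subset_closure_cylinder : axisSegment ⊆ closure _root_.cylinder := by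
  rintro x ⟨h0, h1, h2⟩
  let axis : ℝ → EuclideanSpace ℝ (Fin 3) := fun t => t • EuclideanSpace.single 2 1
  have hx : x = axis (x 2) := by ext i; fin_cases i <;> simp [axis, h0, h1]
  have hsub : axis '' Ioo 0 1 ⊆ _root_.cylinder := by
    rintro _ ⟨t, ht, rfl⟩
    simpa [_root_.cylinder, axis] using ht
  rw [hx]
  exact closure_mono hsub (image_closure_subset_closure_image (by fun_prop)
    ⟨x 2, by rwa [closure_Ioo zero_ne_one], rfl⟩)

theorem measure_closure_cylinder_of_compl_axisSegment_null
    {ν : Measure (EuclideanSpace ℝ (Fin 3))} (hν : ν axisSegmentᶜ = 0) :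
    ν (closure _root_.cylinder) = ν univ :=
  measure_congr <| ae_eq_univ.2 <|
    measure_mono_null (compl_subset_compl.2 axisSegment_subset_closure_cylinder) hν

theorem setLIntegral_sqrt_sq_add_sq_of_compl_axisSegment_null
    {ν : Measure (EuclideanSpace ℝ (Fin 3))} (hν : ν axisSegmentᶜ = 0)
    (s : Set (EuclideanSpace ℝ (Fin 3))) :
    ∫⁻ x in s, ENNReal.ofReal √(x 0 ^ 2 + x 1 ^ 2) ∂ν = 0 := by
  refine (lintegral_congr_ae (ae_restrict_of_ae ((ae_iff.2 hν).mono ?_))).trans lintegral_zero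
  rintro x ⟨h0, h1, -⟩
  simp [h0, h1]

theorem stmt19_general (ρ : ℝ) (hρ0 : 0 < ρ) (hρ : ρ < 1 / (2 * Real.pi))
    (ν : Measure (EuclideanSpace ℝ (Fin 3))) [IsFiniteMeasure ν]
    (hνsupp : ν {x : EuclideanSpace ℝ (Fin 3) |
      x 0 = 0 ∧ x 1 = 0 ∧ x 2 ∈ Set.Icc (0 : ℝ) 1}ᶜ = 0)
    (M : ℝ) (hM : M = (ν Set.univ).toReal / (1 - 2 * Real.pi * ρ)) :
    ∀ A : Set (EuclideanSpace ℝ (Fin 3)), MeasurableSet A → A ⊆ closure cylinder →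
      ρ * ((ν + (volume.restrict cylinder).withDensity
            (fun x => ENNReal.ofReal (ρ * M / Real.sqrt (x 0 ^ 2 + x 1 ^ 2))))
            (closure cylinder)).toReal *
          (volume (A ∩ cylinder)).toReal =
        ∫ x in A, Real.sqrt (x 0 ^ 2 + x 1 ^ 2)
          ∂(ν + (volume.restrict cylinder).withDensity
            (fun x => ENNReal.ofReal (ρ * M / Real.sqrt (x 0 ^ 2 + x 1 ^ 2)))) := by
  intro A hA _
  have hgap : 0 < 1 - 2 * Real.pi * ρ := by
    rw [lt_div_iff₀ (by positivity)] at hρ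
    linarith
  have hc : 0 ≤ ρ * M := mul_nonneg hρ0.le (hM ▸ by positivity)
  rw [integral_eq_lintegral_of_nonneg_ae (ae_of_all _ fun _ => Real.sqrt_nonneg _)
      (by fun_prop), Measure.restrict_add, lintegral_add_measure,
    setLIntegral_sqrt_sq_add_sq_of_compl_axisSegment_null hνsupp, zero_add,
    setLIntegral_withDensity_div_self (by fun_prop) (ae_restrict_of_ae ae_sqrt_sq_add_sq_pos) _ hA,
    Measure.restrict_apply hA, Measure.add_apply,
    measure_closure_cylinder_of_compl_axisSegment_null hνsupp,
    withDensity_apply _ measurableSet_closure, Measure.restrict_restrict measurableSet_closure,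
    inter_eq_self_of_subset_right subset_closure, setLIntegral_cylinder_div_sqrt,
    ENNReal.toReal_add (measure_ne_top ν _) (by finiteness)]
  simp only [ENNReal.toReal_mul, ENNReal.toReal_ofReal hc,
    ENNReal.toReal_ofReal Real.two_pi_pos.le]
  have hν_mass : (ν univ).toReal = M * (1 - 2 * Real.pi * ρ) := by
    rw [hM, div_mul_cancel₀ _ hgap.ne']
  rw [hν_mass]
  ring

/-- For the unit cylinder, `a(x) = 1 - √(x₁²+x₂²)` and `0 < ρ < 1/(2π)`: for any
nonzero finite positive measure `ν` supported in the axis segment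
`Ω₀ = {(0,0,x₃) : x₃ ∈ [0,1]}` and `M = ν(Ω̄)/(1 - 2πρ)`, the measure
`μ = ν + (ρM/√(x₁²+x₂²)) dx` solves the spectral problem at `λ_p = -1`. -/
theorem stmt19 (ρ : ℝ) (hρ0 : 0 < ρ) (hρ : ρ < 1 / (2 * Real.pi))
    (ν : Measure (EuclideanSpace ℝ (Fin 3))) [IsFiniteMeasure ν] (hν0 : ν ≠ 0)
    (hνsupp : ν {x : EuclideanSpace ℝ (Fin 3) |
      x 0 = 0 ∧ x 1 = 0 ∧ x 2 ∈ Set.Icc (0 : ℝ) 1}ᶜ = 0)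
    (M : ℝ) (hM : M = (ν Set.univ).toReal / (1 - 2 * Real.pi * ρ)) :
    ∀ A : Set (EuclideanSpace ℝ (Fin 3)), MeasurableSet A → A ⊆ closure cylinder →
      ρ * ((ν + (volume.restrict cylinder).withDensity
            (fun x => ENNReal.ofReal (ρ * M / Real.sqrt (x 0 ^ 2 + x 1 ^ 2))))
            (closure cylinder)).toReal *
          (volume (A ∩ cylinder)).toReal =
        ∫ x in A, Real.sqrt (x 0 ^ 2 + x 1 ^ 2)
          ∂(ν + (volume.restrict cylinder).withDensity
            (fun x => ENNReal.ofReal (ρ * M / Real.sqrt (x 0 ^ 2 + x 1 ^ 2)))) :=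
  stmt19_general ρ hρ0 hρ ν hνsupp M hM
end
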